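/- Let X be a systolic complex and let γ0, γ1 be two geodesics between vertices x and y, both of length n, meeting only at x and y, and let S: Δ → X be the minimal (hence flat) surface spanned by the cycle γ0 * γ1. Then every interior vertex of Δ is at distance at most n - 2 from each of the two endpoints x and y in the 1-skeleton of Δ; consequently the image of every interior vertex is at distance at most n - 2 from both x and y in X. -/

import Mathlib

open Finset

noncomputable section
open scoped Classical

/-- An abstract simplicial complex on vertex type `V`, given by its set of
(nonempty, finite) faces, closed under passing to nonempty subsets. -/
structure SComplex (V : Type) [DecidableEq V] where
  faces : Set (Finset V)
  not_empty_mem : ∅ ∉ faces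
  down_closed : ∀ s ∈ faces, ∀ t ⊆ s, t.Nonempty → t ∈ faces

namespace SComplex

variable {V : Type} [DecidableEq V] (K : SComplex V)

/-- The 1-skeleton of a simplicial complex, as a simple graph. -/
def graph : SimpleGraph V where
  Adj a b := a ≠ b ∧ ({a, b} : Finset V) ∈ K.faces
  symm := by
    constructor
    beta_reduce
    intro a b h
    refine ⟨h.1.symm, ?_⟩
    rw [Finset.pair_comm]
    exact h.2
  loopless := by
    constructor
    beta_reduce
    intro a h
    exact h.1 rfl

/-- A flag complex: every finite set of pairwise adjacent vertices spans a simplex. -/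
def Flag : Prop :=
  ∀ s : Finset V, s.Nonempty → (∀ a ∈ s, ∀ b ∈ s, a ≠ b → K.graph.Adj a b) → s ∈ K.faces

/-- An embedded cycle of length `n` in the 1-skeleton, given by an injective map
from `ZMod n` with consecutive vertices adjacent. -/
def IsCycle (n : ℕ) (f : ZMod n → V) : Prop :=
  Function.Injective f ∧ ∀ i : ZMod n, K.graph.Adj (f i) (f (i + 1))

/-- The cycle `f` has a diagonal: an edge joining two nonconsecutive vertices. -/
def HasDiagonal (n : ℕ) (f : ZMod n → V) : Prop :=
  ∃ i j : ZMod n, j ≠ i ∧ j ≠ i + 1 ∧ j ≠ i - 1 ∧ K.graph.Adj (f i) (f j)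

/-- `k`-largeness: flag, and every embedded cycle of length `3 < n < k` has a diagonal. -/
def Large (k : ℕ) : Prop :=
  K.Flag ∧ ∀ n : ℕ, 3 < n → n < k → ∀ f : ZMod n → V, K.IsCycle n f → K.HasDiagonal n f

/-- The link of a simplex `σ`. -/
def link (σ : Finset V) : SComplex V where
  faces := {t | t.Nonempty ∧ Disjoint t σ ∧ t ∪ σ ∈ K.faces}
  not_empty_mem := by
    rintro ⟨h, -, -⟩
    simp at h
  down_closed := by
    rintro s ⟨-, hd, hu⟩ t hts htne
    refine ⟨htne, hd.mono_left ?_, K.down_closed _ hu _ (Finset.union_subset_union hts Finset.Subset.rfl) ?_⟩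
    · exact Finset.le_iff_subset.2 hts
    · obtain ⟨x, hx⟩ := htne
      exact ⟨x, Finset.mem_union_left _ hx⟩

/-- Local `k`-largeness: the link of every simplex is `k`-large. -/
def LocallyLarge (k : ℕ) : Prop :=
  ∀ σ ∈ K.faces, (K.link σ).Large k

/-- A (full) geodesically convex subcomplex, specified by its vertex set:
it contains every geodesic of the 1-skeleton between any two of its vertices. -/
def ConvexSub (A : Set V) : Prop :=
  (∀ v ∈ A, ({v} : Finset V) ∈ K.faces) ∧
  ∀ x ∈ A, ∀ y ∈ A, ∀ p : K.graph.Walk x y, p.length = K.graph.dist x y →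
    ∀ v ∈ p.support, v ∈ A

/-- A `3`-convex subcomplex: full (each vertex is a vertex of `K`), and containing the
middle vertex of every geodesic of length 2 with both endpoints in it. -/
def ThreeConvex (A : Set V) : Prop :=
  (∀ v ∈ A, ({v} : Finset V) ∈ K.faces) ∧
  ∀ x ∈ A, ∀ z ∈ A, ∀ u : V, K.graph.Adj x u → K.graph.Adj u z →
    K.graph.dist x z = 2 → u ∈ A

end SComplex

/-- A combinatorial 2-dimensional surface-like complex: a finite set of triangles
(3-element vertex sets), every edge lying in at most two triangles. -/
structure CombSurface (W : Type) [DecidableEq W] where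
  triangles : Finset (Finset W)
  card_eq : ∀ t ∈ triangles, t.card = 3
  edge_le_two : ∀ e : Finset W, e.card = 2 → (triangles.filter fun t => e ⊆ t).card ≤ 2

namespace CombSurface

variable {W : Type} [DecidableEq W] (D : CombSurface W)

/-- Vertices of the surface. -/
def verts : Finset W := D.triangles.biUnion id

/-- Edges of the surface (2-element subsets of triangles). -/
def edges : Finset (Finset W) := D.triangles.biUnion fun t => Finset.powersetCard 2 t

/-- 1-skeleton of the surface. -/
def graph : SimpleGraph W where
  Adj a b := a ≠ b ∧ ∃ t ∈ D.triangles, a ∈ t ∧ b ∈ t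
  symm := by
    constructor
    beta_reduce
    rintro a b ⟨h1, t, ht, ha, hb⟩
    exact ⟨h1.symm, t, ht, hb, ha⟩
  loopless := by
    constructor
    beta_reduce
    rintro a ⟨h, -⟩
    exact h rfl

/-- The number of triangles containing a vertex. -/
def numTri (v : W) : ℕ := (D.triangles.filter fun t => v ∈ t).card

/-- A boundary edge: an edge contained in exactly one triangle. -/
def BoundaryEdge (e : Finset W) : Prop :=
  e.card = 2 ∧ (D.triangles.filter fun t => e ⊆ t).card = 1

/-- A boundary vertex: a vertex lying on a boundary edge. -/
def IsBoundary (v : W) : Prop := ∃ e : Finset W, D.BoundaryEdge e ∧ v ∈ e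

/-- The defect of a vertex: `3 - numTri` for boundary vertices, `6 - numTri` for
interior vertices. -/
def defect (v : W) : ℤ :=
  (if D.IsBoundary v then 3 else 6) - (D.numTri v : ℤ)

/-- Euler characteristic `V - E + F`. -/
def euler : ℤ := (D.verts.card : ℤ) - (D.edges.card : ℤ) + (D.triangles.card : ℤ)

/-- The link graph at a vertex `v`: two vertices are adjacent iff they span a
triangle together with `v`. -/
def linkGraph (v : W) : SimpleGraph W where
  Adj a b := a ≠ b ∧ ({v, a, b} : Finset W) ∈ D.triangles
  symm := by
    constructor
    beta_reduce
    rintro a b ⟨h1, h2⟩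
    refine ⟨h1.symm, ?_⟩
    rwa [Finset.pair_comm]
  loopless := by
    constructor
    beta_reduce
    rintro a ⟨h, -⟩
    exact h rfl

/-- The manifold condition: the link of every vertex is connected (together with
`edge_le_two` this makes every vertex link a path or a cycle). -/
def IsManifold : Prop :=
  ∀ v a b : W, D.graph.Adj v a → D.graph.Adj v b → (D.linkGraph v).Reachable a b

/-- The 1-skeleton is connected on the vertices of the surface. -/
def Conn : Prop := ∀ a ∈ D.verts, ∀ b ∈ D.verts, D.graph.Reachable a b

/-- A combinatorial disc: a connected combinatorial surface with Euler
characteristic 1 and nonempty boundary. -/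
def IsDisc : Prop :=
  D.IsManifold ∧ D.Conn ∧ D.euler = 1 ∧ ∃ e : Finset W, D.BoundaryEdge e

/-- An enumeration of the boundary of the surface as a cycle. -/
def BCycle (n : ℕ) (g : ZMod n → W) : Prop :=
  Function.Injective g ∧ (∀ i : ZMod n, D.BoundaryEdge {g i, g (i + 1)}) ∧
    ∀ v ∈ D.verts, D.IsBoundary v → ∃ i : ZMod n, g i = v

end CombSurface

/-- The area of a simplicial map on a surface: the number of triangles on which
it is injective. -/
def areaOf {W : Type} [DecidableEq W] {V : Type} [DecidableEq V]
    (D : CombSurface W) (φ : W → V) : ℕ :=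
  (D.triangles.filter fun t => (t.image φ).card = 3).card

namespace SComplex

variable {V : Type} [DecidableEq V] (K : SComplex V)

/-- A simplicial map from a combinatorial surface to the complex. -/
def IsSurfaceMap {W : Type} [DecidableEq W] (D : CombSurface W) (φ : W → V) : Prop :=
  ∀ t ∈ D.triangles, t.image φ ∈ K.faces

/-- The surface `(D, φ)` spans the cycle `f`: it is a simplicial map from a disc
whose boundary is mapped isomorphically onto `f`. -/
def Spans {W : Type} [DecidableEq W] (D : CombSurface W) (φ : W → V)
    {n : ℕ} (f : ZMod n → V) : Prop :=
  K.IsSurfaceMap D φ ∧ D.IsDisc ∧ ∃ g : ZMod n → W, D.BCycle n g ∧ ∀ i, φ (g i) = f i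

/-- `(D, φ)` is a minimal surface spanning the cycle `f`. -/
def MinSpans (D : CombSurface ℕ) (φ : ℕ → V) {n : ℕ} (f : ZMod n → V) : Prop :=
  K.Spans D φ f ∧
    ∀ (D' : CombSurface ℕ) (φ' : ℕ → V), K.Spans D' φ' f → areaOf D φ ≤ areaOf D' φ'

/-- Simple connectivity: every embedded cycle is spanned by a disc surface. -/
def SimplyConnected : Prop :=
  ∀ n : ℕ, 3 ≤ n → ∀ f : ZMod n → V, K.IsCycle n f →
    ∃ (D : CombSurface ℕ) (φ : ℕ → V), K.Spans D φ f

/-- `k`-systolic: connected, simply connected and locally `k`-large. -/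
def Systolic (k : ℕ) : Prop :=
  K.graph.Connected ∧ K.SimplyConnected ∧ K.LocallyLarge k

end SComplex

/-- The equilateral triangulation of the Euclidean plane: the triangular lattice
on `ℤ × ℤ` (1-skeleton). -/
def TriLattice : SimpleGraph (ℤ × ℤ) where
  Adj p q := p ≠ q ∧
    (p.1 - q.1) ^ 2 + (p.1 - q.1) * (p.2 - q.2) + (p.2 - q.2) ^ 2 = 1
  symm := by
    constructor
    beta_reduce
    rintro p q ⟨h1, h2⟩
    refine ⟨h1.symm, ?_⟩
    ring_nf
    ring_nf at h2
    linarith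
  loopless := by
    constructor
    beta_reduce
    rintro p ⟨h, -⟩
    exact h rfl



/-!
Distances in the triangular lattice are given by the hexagonal norm
`max (|a|, |b|, |a + b|)`, the maximum of six linear forms. Around an interior vertex a flat
surface fills a whole lattice hexagon, so from an interior vertex one can always step one unit
further away from `x`. Hence the distance from `x` is maximal on the boundary, that is on the
two geodesics, and an interior vertex at distance `≥ n - 1` from `x` would be a neighbour of `y`
at distance `n - 1`. With the penultimate vertices of the two geodesics this gives `y` three
neighbours one step closer to `x`, whereas the linear form supporting `ι y - ι x` is negative on
only two of the six lattice directions. Simplicial maps do not increase distances, which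
transfers the bound to the complex.
-/

def hexNorm (p : ℤ × ℤ) : ℕ := max (max p.1.natAbs p.2.natAbs) (p.1 + p.2).natAbs

def hexUnits : List (ℤ × ℤ) := [(1, 0), (0, 1), (-1, 1), (-1, 0), (0, -1), (1, -1)]

def pairing (s p : ℤ × ℤ) : ℤ := s.1 * p.1 + s.2 * p.2

/-- `hexNorm` is the maximum of the linear forms `pairing s`, `s ∈ hexDual`. -/
def hexDual : List (ℤ × ℤ) := [(1, 0), (0, 1), (1, 1), (-1, 0), (0, -1), (-1, -1)]

def rot60 (e : ℤ × ℤ) : ℤ × ℤ := (e.1 + e.2, -e.1)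

theorem hexNorm_add_le (p q : ℤ × ℤ) : hexNorm (p + q) ≤ hexNorm p + hexNorm q := by
  have h1 : p.1.natAbs ≤ hexNorm p := le_max_of_le_left (le_max_left _ _)
  have h2 : p.2.natAbs ≤ hexNorm p := le_max_of_le_left (le_max_right _ _)
  have h3 : (p.1 + p.2).natAbs ≤ hexNorm p := le_max_right _ _
  have k1 : q.1.natAbs ≤ hexNorm q := le_max_of_le_left (le_max_left _ _)
  have k2 : q.2.natAbs ≤ hexNorm q := le_max_of_le_left (le_max_right _ _)
  have k3 : (q.1 + q.2).natAbs ≤ hexNorm q := le_max_right _ _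
  simp only [hexNorm, Prod.fst_add, Prod.snd_add, max_le_iff]
  omega

theorem hexNorm_eq_zero {p : ℤ × ℤ} : hexNorm p = 0 ↔ p = 0 := by
  simp only [hexNorm, Prod.ext_iff, Prod.fst_zero, Prod.snd_zero]
  omega

theorem hexNorm_of_mem_hexUnits {e : ℤ × ℤ} (he : e ∈ hexUnits) : hexNorm e = 1 := by
  fin_cases he <;> rfl

theorem mem_hexUnits_iff {e : ℤ × ℤ} : e ∈ hexUnits ↔ e.1 ^ 2 + e.1 * e.2 + e.2 ^ 2 = 1 := by
  obtain ⟨a, b⟩ := e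
  refine ⟨fun h => by fin_cases h <;> norm_num, fun h => ?_⟩
  have hb1 : -1 ≤ b := by nlinarith [sq_nonneg (2 * a + b)]
  have hb2 : b ≤ 1 := by nlinarith [sq_nonneg (2 * a + b)]
  have ha1 : -1 ≤ a := by nlinarith [sq_nonneg (a + 2 * b)]
  have ha2 : a ≤ 1 := by nlinarith [sq_nonneg (a + 2 * b)]
  interval_cases a <;> interval_cases b <;> simp_all [hexUnits]

theorem exists_hexNorm_sub_add_one {p : ℤ × ℤ} (hp : p ≠ 0) :
    ∃ e ∈ hexUnits, hexNorm (p - e) + 1 = hexNorm p := by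
  obtain ⟨a, b⟩ := p
  simp only [Prod.ext_iff, Prod.fst_zero, Prod.snd_zero, ne_eq, not_and_or] at hp
  simp only [hexNorm] at *
  rcases lt_trichotomy a 0 with ha | ha | ha <;> rcases lt_trichotomy b 0 with hb | hb | hb
  · exact ⟨(-1, 0), by decide, by simp only [Prod.mk_sub_mk]; omega⟩
  · exact ⟨(-1, 0), by decide, by simp only [Prod.mk_sub_mk]; omega⟩
  · exact ⟨(-1, 1), by decide, by simp only [Prod.mk_sub_mk]; omega⟩
  · exact ⟨(0, -1), by decide, by simp only [Prod.mk_sub_mk]; omega⟩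
  · omega
  · exact ⟨(0, 1), by decide, by simp only [Prod.mk_sub_mk]; omega⟩
  · exact ⟨(1, -1), by decide, by simp only [Prod.mk_sub_mk]; omega⟩
  · exact ⟨(1, 0), by decide, by simp only [Prod.mk_sub_mk]; omega⟩
  · exact ⟨(1, 0), by decide, by simp only [Prod.mk_sub_mk]; omega⟩

namespace TriLattice

theorem adj_iff_sub_mem_hexUnits {p q : ℤ × ℤ} : TriLattice.Adj p q ↔ q - p ∈ hexUnits := by
  have hq : q - p = -(p - q) := (neg_sub p q).symm
  rw [hq, mem_hexUnits_iff]
  simp only [Prod.fst_neg, Prod.snd_neg, Prod.fst_sub, Prod.snd_sub]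
  refine ⟨fun h => by linear_combination h.2, fun h => ⟨fun hpq => ?_, by linear_combination h⟩⟩
  subst hpq
  simp at h

theorem hexNorm_sub_le_length {p q : ℤ × ℤ} (w : TriLattice.Walk p q) :
    hexNorm (q - p) ≤ w.length := by
  induction w with
  | nil => simp [hexNorm]
  | @cons p r q h w ih =>
    calc hexNorm (q - p) = hexNorm ((q - r) + (r - p)) := by rw [sub_add_sub_cancel]
      _ ≤ hexNorm (q - r) + hexNorm (r - p) := hexNorm_add_le _ _
      _ ≤ (w.cons h).length := by
        rw [hexNorm_of_mem_hexUnits (adj_iff_sub_mem_hexUnits.mp h), SimpleGraph.Walk.length_cons]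
        omega

theorem exists_walk_length_eq_hexNorm (p q : ℤ × ℤ) :
    ∃ w : TriLattice.Walk p q, w.length = hexNorm (q - p) := by
  induction h : hexNorm (q - p) generalizing p with
  | zero =>
    exact ⟨SimpleGraph.Walk.nil.copy rfl (sub_eq_zero.mp (hexNorm_eq_zero.mp h)).symm, by simp⟩
  | succ n ih =>
    obtain ⟨e, he, hne⟩ := exists_hexNorm_sub_add_one (p := q - p) (by
      rintro h0; simp [h0, hexNorm] at h)
    obtain ⟨w, hw⟩ := ih (p + e) (by rw [← sub_sub]; omega)
    have hadj : TriLattice.Adj p (p + e) := adj_iff_sub_mem_hexUnits.mpr (by simpa using he)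
    exact ⟨.cons hadj w, by simp [hw]⟩

theorem dist_eq_hexNorm (p q : ℤ × ℤ) : TriLattice.dist p q = hexNorm (q - p) := by
  obtain ⟨w, hw⟩ := exists_walk_length_eq_hexNorm p q
  obtain ⟨w', hw'⟩ := SimpleGraph.Reachable.exists_walk_length_eq_dist ⟨w⟩
  exact le_antisymm (hw ▸ SimpleGraph.dist_le w) (hw' ▸ hexNorm_sub_le_length w')

end TriLattice

theorem pairing_add (s p q : ℤ × ℤ) : pairing s (p + q) = pairing s p + pairing s q := by
  simp only [pairing, Prod.fst_add, Prod.snd_add]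
  ring

theorem pairing_le_hexNorm {s : ℤ × ℤ} (hs : s ∈ hexDual) (p : ℤ × ℤ) :
    pairing s p ≤ hexNorm p := by
  fin_cases hs <;> (simp only [pairing, hexNorm]; omega)

theorem exists_pairing_eq_hexNorm (p : ℤ × ℤ) : ∃ s ∈ hexDual, pairing s p = hexNorm p := by
  simp only [hexDual, List.mem_cons, List.not_mem_nil, or_false, exists_eq_or_imp,
    exists_eq_left, pairing, hexNorm]
  omega

theorem exists_mem_hexUnits_pairing_eq_one :
    ∀ s ∈ hexDual, ∃ e ∈ hexUnits, pairing s e = 1 := by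
  decide

theorem eq_or_eq_of_pairing_le_neg_one : ∀ s ∈ hexDual, ∀ e₁ ∈ hexUnits, ∀ e₂ ∈ hexUnits,
    ∀ e₃ ∈ hexUnits, pairing s e₁ ≤ -1 → pairing s e₂ ≤ -1 → pairing s e₃ ≤ -1 →
      e₁ = e₂ ∨ e₁ = e₃ ∨ e₂ = e₃ := by
  decide

theorem rot60_mem_hexUnits : ∀ e ∈ hexUnits, rot60 e ∈ hexUnits ∧ rot60 e - e ∈ hexUnits := by
  decide

theorem eq_or_eq_of_sub_mem_hexUnits : ∀ e ∈ hexUnits, ∀ f₁ ∈ hexUnits, ∀ f₂ ∈ hexUnits,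
    ∀ g ∈ hexUnits, f₁ - e ∈ hexUnits → f₂ - e ∈ hexUnits → g - e ∈ hexUnits → f₁ ≠ f₂ →
      g = f₁ ∨ g = f₂ := by
  decide

theorem hexUnits_eq_rot60_iterate : ∀ e ∈ hexUnits, ∀ f ∈ hexUnits, ∃ k < 6, f = rot60^[k] e := by
  decide

theorem forall_mem_hexUnits_of_rot60 {P : ℤ × ℤ → Prop} {e₀ : ℤ × ℤ} (he₀ : e₀ ∈ hexUnits)
    (h₀ : P e₀) (hrot : ∀ e ∈ hexUnits, P e → P (rot60 e)) : ∀ f ∈ hexUnits, P f := by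
  have hiter : ∀ k, rot60^[k] e₀ ∈ hexUnits ∧ P (rot60^[k] e₀) := by
    intro k
    induction k with
    | zero => exact ⟨he₀, h₀⟩
    | succ k ih =>
      rw [Function.iterate_succ_apply']
      exact ⟨(rot60_mem_hexUnits _ ih.1).1, hrot _ ih.1 ih.2⟩
  intro f hf
  obtain ⟨k, -, rfl⟩ := hexUnits_eq_rot60_iterate e₀ he₀ f hf
  exact (hiter k).2

theorem SimpleGraph.Walk.dist_add_dist_of_mem_support {V : Type*} {G : SimpleGraph V}
    {x y v : V} (p : G.Walk x y) (hp : p.length = G.dist x y) (hv : v ∈ p.support) :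
    G.dist x v + G.dist v y = G.dist x y := by
  have hsplit := congrArg SimpleGraph.Walk.length (p.take_spec hv)
  rw [SimpleGraph.Walk.length_append] at hsplit
  refine le_antisymm ?_ (SimpleGraph.Reachable.dist_triangle_left ⟨p.takeUntil v hv⟩ y)
  calc G.dist x v + G.dist v y ≤ (p.takeUntil v hv).length + (p.dropUntil v hv).length :=
        add_le_add (SimpleGraph.dist_le _) (SimpleGraph.dist_le _)
    _ = G.dist x y := by rw [hsplit, hp]

theorem SimpleGraph.Walk.dist_penultimate_add_one {V : Type*} {G : SimpleGraph V} {x y : V}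
    (p : G.Walk x y) (hp : p.length = G.dist x y) (hpos : 0 < p.length) :
    G.dist x p.penultimate + 1 = G.dist x y := by
  rw [← p.dist_add_dist_of_mem_support hp (p.getVert_mem_support _),
    SimpleGraph.dist_eq_one_iff_adj.mpr (p.adj_penultimate (not_nil_iff_lt_length.mpr hpos))]

namespace CombSurface

variable {W : Type} [DecidableEq W] {D : CombSurface W}

theorem mem_verts_of_mem {t : Finset W} {a : W} (ht : t ∈ D.triangles) (ha : a ∈ t) :
    a ∈ D.verts :=
  Finset.mem_biUnion.mpr ⟨t, ht, ha⟩

theorem mem_verts_of_adj {a b : W} (h : D.graph.Adj a b) : a ∈ D.verts ∧ b ∈ D.verts := by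
  obtain ⟨-, t, ht, ha, hb⟩ := h
  exact ⟨mem_verts_of_mem ht ha, mem_verts_of_mem ht hb⟩

theorem exists_eq_insert_pair {t : Finset W} {a b : W} (ht : t ∈ D.triangles) (hab : a ≠ b)
    (hsub : {a, b} ⊆ t) : ∃ q ∉ ({a, b} : Finset W), t = insert q {a, b} := by
  have hcard : (t \ {a, b}).card = 1 := by
    rw [Finset.card_sdiff_of_subset hsub, D.card_eq t ht, Finset.card_pair hab]
  obtain ⟨q, hq⟩ := Finset.card_eq_one.mp hcard
  have hqt : q ∈ t \ {a, b} := hq ▸ Finset.mem_singleton_self q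
  refine ⟨q, (Finset.mem_sdiff.mp hqt).2, ?_⟩
  rw [← Finset.sdiff_union_of_subset hsub, hq, Finset.singleton_union]

/-- The third vertices of the two triangles on the edge. -/
theorem exists_common_adj_pair_of_not_isBoundary {w w' : W} (hadj : D.graph.Adj w w')
    (hw : ¬D.IsBoundary w) : ∃ q₁ q₂, q₁ ≠ q₂ ∧ D.graph.Adj w q₁ ∧ D.graph.Adj w' q₁ ∧
      D.graph.Adj w q₂ ∧ D.graph.Adj w' q₂ := by
  set F := D.triangles.filter fun t => ({w, w'} : Finset W) ⊆ t
  obtain ⟨hne, t₀, ht₀, hwt₀, hw't₀⟩ := hadj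
  have ht₀F : t₀ ∈ F := Finset.mem_filter.mpr ⟨ht₀, Finset.insert_subset hwt₀ (by simpa)⟩
  have hF : F.card ≠ 1 := fun h => hw ⟨{w, w'}, ⟨Finset.card_pair hne, h⟩, by simp⟩
  have hF₂ : 1 < F.card := by have := Finset.card_pos.mpr ⟨t₀, ht₀F⟩; omega
  obtain ⟨t₁, ht₁, t₂, ht₂, ht₁₂⟩ := Finset.one_lt_card.mp hF₂
  obtain ⟨ht₁D, hsub₁⟩ := Finset.mem_filter.mp ht₁
  obtain ⟨ht₂D, hsub₂⟩ := Finset.mem_filter.mp ht₂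
  obtain ⟨q₁, hq₁, rfl⟩ := exists_eq_insert_pair ht₁D hne hsub₁
  obtain ⟨q₂, hq₂, rfl⟩ := exists_eq_insert_pair ht₂D hne hsub₂
  simp only [Finset.mem_insert, Finset.mem_singleton, not_or] at hq₁ hq₂
  have adj : ∀ {t a b}, t ∈ D.triangles → a ∈ t → b ∈ t → a ≠ b → D.graph.Adj a b :=
    fun ht ha hb hab => ⟨hab, _, ht, ha, hb⟩
  exact ⟨q₁, q₂, fun h => ht₁₂ (by rw [h]),
    adj ht₁D (by simp) (by simp) (Ne.symm hq₁.1), adj ht₁D (by simp) (by simp) (Ne.symm hq₁.2),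
    adj ht₂D (by simp) (by simp) (Ne.symm hq₂.1), adj ht₂D (by simp) (by simp) (Ne.symm hq₂.2)⟩

theorem isBoundary_of_mem_support {x y v : W} {p : D.graph.Walk x y}
    (hb : ∀ i < p.length, D.BoundaryEdge {p.getVert i, p.getVert (i + 1)})
    (hp : 0 < p.length) (hv : v ∈ p.support) : D.IsBoundary v := by
  obtain ⟨i, rfl, hi⟩ := SimpleGraph.Walk.mem_support_iff_exists_getVert.mp hv
  rcases hi.lt_or_eq with hi | rfl
  · exact ⟨_, hb i hi, Finset.mem_insert_self _ _⟩
  · refine ⟨_, hb (p.length - 1) (by omega), ?_⟩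
    rw [Nat.sub_add_cancel hp]
    exact Finset.mem_insert_of_mem (Finset.mem_singleton_self _)

end CombSurface

namespace SComplex

variable {V W : Type} [DecidableEq V] [DecidableEq W] {K : SComplex V} {D : CombSurface W}
  {φ : W → V}

theorem IsSurfaceMap.exists_walk_length_le (hφ : K.IsSurfaceMap D φ) {a b : W}
    (p : D.graph.Walk a b) : ∃ q : K.graph.Walk (φ a) (φ b), q.length ≤ p.length := by
  induction p with
  | nil => exact ⟨.nil, le_rfl⟩
  | @cons a c b h p ih =>
    obtain ⟨q, hq⟩ := ih
    by_cases heq : φ a = φ c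
    · refine ⟨q.copy heq.symm rfl, ?_⟩
      rw [SimpleGraph.Walk.length_copy, SimpleGraph.Walk.length_cons]
      omega
    · obtain ⟨-, t, ht, hat, hct⟩ := h
      have hface : ({φ a, φ c} : Finset V) ∈ K.faces :=
        K.down_closed _ (hφ t ht) _
          (Finset.insert_subset (Finset.mem_image_of_mem φ hat)
            (Finset.singleton_subset_iff.mpr (Finset.mem_image_of_mem φ hct)))
          (Finset.insert_nonempty _ _)
      have hadj : K.graph.Adj (φ a) (φ c) := ⟨heq, hface⟩
      exact ⟨.cons hadj q, Nat.succ_le_succ hq⟩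

theorem IsSurfaceMap.dist_le (hφ : K.IsSurfaceMap D φ) {a b : W} (h : D.graph.Reachable a b) :
    K.graph.dist (φ a) (φ b) ≤ D.graph.dist a b := by
  obtain ⟨p, hp⟩ := h.exists_walk_length_eq_dist
  obtain ⟨q, hq⟩ := hφ.exists_walk_length_le p
  exact (SimpleGraph.dist_le q).trans (hp ▸ hq)

end SComplex

structure CombSurface.IsFlatEmbedding {W : Type} [DecidableEq W] (D : CombSurface W)
    (ι : W → ℤ × ℤ) : Prop where
  dist_eq : ∀ a ∈ D.verts, ∀ b ∈ D.verts, TriLattice.dist (ι a) (ι b) = D.graph.dist a b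
  injOn : Set.InjOn ι D.verts

namespace CombSurface.IsFlatEmbedding

variable {W : Type} [DecidableEq W] {D : CombSurface W} {ι : W → ℤ × ℤ}

theorem dist_eq_hexNorm (hD : D.IsFlatEmbedding ι) {a b : W} (ha : a ∈ D.verts)
    (hb : b ∈ D.verts) : D.graph.dist a b = hexNorm (ι b - ι a) := by
  rw [← hD.dist_eq a ha b hb, TriLattice.dist_eq_hexNorm]

theorem reachable (hD : D.IsFlatEmbedding ι) {a b : W} (ha : a ∈ D.verts) (hb : b ∈ D.verts) :
    D.graph.Reachable a b := by
  by_contra h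
  have h₀ := SimpleGraph.dist_eq_zero_of_not_reachable h
  rw [hD.dist_eq_hexNorm ha hb, hexNorm_eq_zero, sub_eq_zero] at h₀
  exact h (hD.injOn ha hb h₀.symm ▸ SimpleGraph.Reachable.refl a)

theorem sub_mem_hexUnits (hD : D.IsFlatEmbedding ι) {a b : W} (h : D.graph.Adj a b) :
    ι b - ι a ∈ hexUnits := by
  obtain ⟨ha, hb⟩ := mem_verts_of_adj h
  rw [← TriLattice.adj_iff_sub_mem_hexUnits, ← SimpleGraph.dist_eq_one_iff_adj,
    hD.dist_eq a ha b hb, SimpleGraph.dist_eq_one_iff_adj]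
  exact h

/-- The two triangles on an edge `w w'` realize both lattice directions next to that of `w'`,
so the realized directions are closed under rotation by `60°`. -/
theorem exists_adj_eq_add (hD : D.IsFlatEmbedding ι) {w : W} (hw : w ∈ D.verts)
    (hnb : ¬D.IsBoundary w) : ∀ e ∈ hexUnits, ∃ w', D.graph.Adj w w' ∧ ι w' = ι w + e := by
  obtain ⟨t, ht, hwt⟩ := Finset.mem_biUnion.mp hw
  obtain ⟨v, hvt, hvw⟩ := Finset.exists_mem_ne (by rw [D.card_eq t ht]; omega : 1 < t.card) w
  have hwv : D.graph.Adj w v := ⟨hvw.symm, t, ht, hwt, hvt⟩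
  refine forall_mem_hexUnits_of_rot60 (hD.sub_mem_hexUnits hwv) ⟨v, hwv, by abel⟩ ?_
  rintro e he ⟨w', hww', he'⟩
  obtain ⟨q₁, q₂, hq, hwq₁, hw'q₁, hwq₂, hw'q₂⟩ :=
    exists_common_adj_pair_of_not_isBoundary hww' hnb
  have hdir : ∀ q, D.graph.Adj w' q → ι q - ι w - e ∈ hexUnits := fun q h => by
    simpa [he', sub_sub] using hD.sub_mem_hexUnits h
  have hne : ι q₁ - ι w ≠ ι q₂ - ι w := fun h =>
    hq (hD.injOn (mem_verts_of_adj hwq₁).2 (mem_verts_of_adj hwq₂).2 (sub_left_inj.mp h))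
  rcases eq_or_eq_of_sub_mem_hexUnits e he _ (hD.sub_mem_hexUnits hwq₁) _
      (hD.sub_mem_hexUnits hwq₂) _ (rot60_mem_hexUnits e he).1 (hdir q₁ hw'q₁) (hdir q₂ hw'q₂)
      (rot60_mem_hexUnits e he).2 hne with h | h
  · exact ⟨q₁, hwq₁, by rw [h]; abel⟩
  · exact ⟨q₂, hwq₂, by rw [h]; abel⟩

/-- Step in a lattice direction on which the form of `hexDual` supporting `ι w - ι x` is `1`. -/
theorem exists_adj_dist_eq_add_one (hD : D.IsFlatEmbedding ι) {x w : W} (hx : x ∈ D.verts)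
    (hw : w ∈ D.verts) (hnb : ¬D.IsBoundary w) :
    ∃ w', D.graph.Adj w w' ∧ D.graph.dist x w' = D.graph.dist x w + 1 := by
  obtain ⟨s, hs, hsn⟩ := exists_pairing_eq_hexNorm (ι w - ι x)
  obtain ⟨e, he, hse⟩ := exists_mem_hexUnits_pairing_eq_one s hs
  obtain ⟨w', hww', hw'⟩ := hD.exists_adj_eq_add hw hnb e he
  have hsplit : ι w' - ι x = (ι w - ι x) + e := by rw [hw']; abel
  refine ⟨w', hww', ?_⟩
  rw [hD.dist_eq_hexNorm hx (mem_verts_of_adj hww').2, hD.dist_eq_hexNorm hx hw, hsplit]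
  refine le_antisymm ((hexNorm_add_le _ _).trans_eq (by rw [hexNorm_of_mem_hexUnits he])) ?_
  have := pairing_le_hexNorm hs (ι w - ι x + e)
  rw [pairing_add, hsn, hse] at this
  omega

theorem dist_le_of_forall_isBoundary (hD : D.IsFlatEmbedding ι) {x : W} {n : ℕ}
    (hx : x ∈ D.verts) (hbd : ∀ v ∈ D.verts, D.IsBoundary v → D.graph.dist x v ≤ n) :
    ∀ v ∈ D.verts, D.graph.dist x v ≤ n := by
  obtain ⟨v₀, hv₀, hmax⟩ := Finset.exists_max_image D.verts (D.graph.dist x) ⟨x, hx⟩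
  intro v hv
  refine (hmax v hv).trans ?_
  by_contra! hlt
  obtain ⟨w', hw', hd⟩ :=
    hD.exists_adj_dist_eq_add_one hx hv₀ fun hb => hlt.not_ge (hbd v₀ hv₀ hb)
  have := hmax w' (mem_verts_of_adj hw').2
  omega

theorem adj_of_dist_add_one_ge (hD : D.IsFlatEmbedding ι) {x y w : W} {n : ℕ}
    (hx : x ∈ D.verts) (hy : y ∈ D.verts)
    (hbd : ∀ v ∈ D.verts, D.IsBoundary v → D.graph.dist x v + D.graph.dist v y = n)
    (hw : w ∈ D.verts) (hnb : ¬D.IsBoundary w) (hfar : n ≤ D.graph.dist x w + 1) :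
    D.graph.Adj w y ∧ D.graph.dist x w + 1 = n := by
  have hle := hD.dist_le_of_forall_isBoundary hx fun v hv hb => (hbd v hv hb).symm ▸ le_self_add
  obtain ⟨w', hww', hdw'⟩ := hD.exists_adj_dist_eq_add_one hx hw hnb
  have hw' := (mem_verts_of_adj hww').2
  have hn : D.graph.dist x w' = n := by have := hle w' hw'; omega
  have hb' : D.IsBoundary w' := by
    by_contra hnb'
    obtain ⟨w'', hw'w'', hdw''⟩ := hD.exists_adj_dist_eq_add_one hx hw' hnb'
    have := hle w'' (mem_verts_of_adj hw'w'').2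
    omega
  have hw'y : w' = y :=
    (hD.reachable hw' hy).dist_eq_zero_iff.mp (by have := hbd w' hw' hb'; omega)
  exact ⟨hw'y ▸ hww', by omega⟩

/-- The directions from `y` to such neighbours are negative on the form of `hexDual`
supporting `ι y - ι x`, and only two unit vectors are. -/
theorem eq_or_eq_of_adj_dist_add_one (hD : D.IsFlatEmbedding ι) {x y a b c : W}
    (hx : x ∈ D.verts) (ha : D.graph.Adj a y) (hb : D.graph.Adj b y) (hc : D.graph.Adj c y)
    (hda : D.graph.dist x a + 1 = D.graph.dist x y)
    (hdb : D.graph.dist x b + 1 = D.graph.dist x y)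
    (hdc : D.graph.dist x c + 1 = D.graph.dist x y) : a = b ∨ a = c ∨ b = c := by
  have hy := (mem_verts_of_adj ha).2
  obtain ⟨s, hs, hsn⟩ := exists_pairing_eq_hexNorm (ι y - ι x)
  have hneg : ∀ v, D.graph.Adj v y → D.graph.dist x v + 1 = D.graph.dist x y →
      pairing s (ι v - ι y) ≤ -1 := fun v hv hdv => by
    have hle := pairing_le_hexNorm hs (ι v - ι y + (ι y - ι x))
    rw [pairing_add, hsn, sub_add_sub_cancel, ← hD.dist_eq_hexNorm hx (mem_verts_of_adj hv).1,
      ← hD.dist_eq_hexNorm hx hy] at hle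
    omega
  have hinj : ∀ {u v}, D.graph.Adj u y → D.graph.Adj v y → ι u - ι y = ι v - ι y → u = v :=
    fun hu hv h => hD.injOn (mem_verts_of_adj hu).1 (mem_verts_of_adj hv).1 (sub_left_inj.mp h)
  rcases eq_or_eq_of_pairing_le_neg_one s hs _ (hD.sub_mem_hexUnits ha.symm) _
      (hD.sub_mem_hexUnits hb.symm) _ (hD.sub_mem_hexUnits hc.symm) (hneg a ha hda)
      (hneg b hb hdb) (hneg c hc hdc) with h | h | h
  · exact Or.inl (hinj ha hb h)
  · exact Or.inr (Or.inl (hinj ha hc h))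
  · exact Or.inr (Or.inr (hinj hb hc h))

/-- An interior vertex `w` violating the bound would be a third neighbour of `y` one step
closer to `x`, next to the penultimate vertices of the two sides. -/
theorem dist_le_dist_sub_two_of_digon (hD : D.IsFlatEmbedding ι) {x y w : W}
    (hx : x ∈ D.verts) (hy : y ∈ D.verts) (p₀ p₁ : D.graph.Walk x y)
    (h₀ : p₀.length = D.graph.dist x y) (h₁ : p₁.length = D.graph.dist x y)
    (hb₀ : ∀ v ∈ p₀.support, D.IsBoundary v) (hb₁ : ∀ v ∈ p₁.support, D.IsBoundary v)
    (hmeet : ∀ v ∈ p₀.support, v ∈ p₁.support → v = x ∨ v = y)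
    (hcover : ∀ v ∈ D.verts, D.IsBoundary v → v ∈ p₀.support ∨ v ∈ p₁.support)
    (hw : w ∈ D.verts) (hnb : ¬D.IsBoundary w) :
    D.graph.dist x w ≤ D.graph.dist x y - 2 := by
  have hgeo : ∀ v ∈ D.verts, D.IsBoundary v →
      D.graph.dist x v + D.graph.dist v y = D.graph.dist x y := fun v hv hbv =>
    (hcover v hv hbv).elim (p₀.dist_add_dist_of_mem_support h₀)
      (p₁.dist_add_dist_of_mem_support h₁)
  by_contra! hlt
  obtain ⟨hwy, hdw⟩ := hD.adj_of_dist_add_one_ge hx hy hgeo hw hnb (by omega)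
  have hdw₀ : D.graph.dist x w ≠ 0 := by
    rw [Ne, (hD.reachable hx hw).dist_eq_zero_iff]
    exact fun h => hnb (h ▸ hb₀ x p₀.start_mem_support)
  have hpos : 0 < D.graph.dist x y := by omega
  have ha := p₀.adj_penultimate (SimpleGraph.Walk.not_nil_iff_lt_length.mpr (h₀ ▸ hpos))
  have hb := p₁.adj_penultimate (SimpleGraph.Walk.not_nil_iff_lt_length.mpr (h₁ ▸ hpos))
  have hda := p₀.dist_penultimate_add_one h₀ (h₀ ▸ hpos)
  have hdb := p₁.dist_penultimate_add_one h₁ (h₁ ▸ hpos)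
  have hmem₀ : p₀.penultimate ∈ p₀.support := p₀.getVert_mem_support _
  have hmem₁ : p₁.penultimate ∈ p₁.support := p₁.getVert_mem_support _
  have hab : p₀.penultimate ≠ p₁.penultimate := fun h => by
    rcases hmeet _ hmem₀ (h ▸ hmem₁) with h' | h'
    · rw [h', SimpleGraph.dist_self] at hda
      omega
    · exact ha.ne h'
  rcases hD.eq_or_eq_of_adj_dist_add_one hx hwy ha hb hdw hda hdb with h | h | h
  · exact hnb (h ▸ hb₀ _ hmem₀)
  · exact hnb (h ▸ hb₁ _ hmem₁)
  · exact hab h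

end CombSurface.IsFlatEmbedding

theorem stmt14_digon_interior_distance_general {V : Type} [DecidableEq V]
    (K : SComplex V)
    (D : CombSurface ℕ) (ι : ℕ → ℤ × ℤ)
    (hiso : ∀ a ∈ D.verts, ∀ b ∈ D.verts,
      TriLattice.dist (ι a) (ι b) = D.graph.dist a b)
    (hinj : ∀ a ∈ D.verts, ∀ b ∈ D.verts, ι a = ι b → a = b)
    (x y : ℕ) (hx : x ∈ D.verts) (hy : y ∈ D.verts) (hxy : x ≠ y)
    {n : ℕ} (hn : D.graph.dist x y = n)
    (p0 p1 : D.graph.Walk x y) (h0 : p0.length = n) (h1 : p1.length = n)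
    (hb0 : ∀ i < p0.length, D.BoundaryEdge {p0.getVert i, p0.getVert (i + 1)})
    (hb1 : ∀ i < p1.length, D.BoundaryEdge {p1.getVert i, p1.getVert (i + 1)})
    (hmeet : ∀ v : ℕ, v ∈ p0.support → v ∈ p1.support → v = x ∨ v = y)
    (hcover : ∀ v ∈ D.verts, D.IsBoundary v → v ∈ p0.support ∨ v ∈ p1.support)
    (φ : ℕ → V) (hmap : K.IsSurfaceMap D φ) :
    ∀ w ∈ D.verts, ¬D.IsBoundary w →
      D.graph.dist w x ≤ n - 2 ∧ D.graph.dist w y ≤ n - 2 ∧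
      K.graph.dist (φ w) (φ x) ≤ n - 2 ∧ K.graph.dist (φ w) (φ y) ≤ n - 2 := by
  intro w hw hnb
  have hD : D.IsFlatEmbedding ι := ⟨hiso, fun a ha b hb => hinj a ha b hb⟩
  have hpos : 0 < n := hn ▸ Nat.pos_of_ne_zero (mt (hD.reachable hx hy).dist_eq_zero_iff.mp hxy)
  have hbd₀ := fun v => CombSurface.isBoundary_of_mem_support (v := v) hb0 (h0 ▸ hpos)
  have hbd₁ := fun v => CombSurface.isBoundary_of_mem_support (v := v) hb1 (h1 ▸ hpos)
  have hwx := hD.dist_le_dist_sub_two_of_digon hx hy p0 p1 (h0.trans hn.symm)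
    (h1.trans hn.symm) hbd₀ hbd₁ hmeet hcover hw hnb
  have hwy := hD.dist_le_dist_sub_two_of_digon hy hx p0.reverse p1.reverse
    (by simp [h0, hn, SimpleGraph.dist_comm]) (by simp [h1, hn, SimpleGraph.dist_comm])
    (by simpa using hbd₀) (by simpa using hbd₁) (by simpa [or_comm] using hmeet)
    (by simpa using hcover) hw hnb
  rw [hn, SimpleGraph.dist_comm] at hwx
  rw [SimpleGraph.dist_comm (u := y) (v := x), hn, SimpleGraph.dist_comm] at hwy
  exact ⟨hwx, hwy, (hmap.dist_le (hD.reachable hw hx)).trans hwx,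
    (hmap.dist_le (hD.reachable hw hy)).trans hwy⟩

/-- every interior vertex of a flat digon spanned by two geodesics
of length `n` is at distance at most `n - 2` from both endpoints, in the domain
and (via the simplicial map) in the systolic complex. -/
theorem stmt14_digon_interior_distance {V : Type} [DecidableEq V]
    (K : SComplex V) (hK : K.Systolic 6)
    (D : CombSurface ℕ) (hdisc : D.IsDisc) (ι : ℕ → ℤ × ℤ)
    (hiso : ∀ a ∈ D.verts, ∀ b ∈ D.verts,
      TriLattice.dist (ι a) (ι b) = D.graph.dist a b)
    (hinj : ∀ a ∈ D.verts, ∀ b ∈ D.verts, ι a = ι b → a = b)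
    (x y : ℕ) (hx : x ∈ D.verts) (hy : y ∈ D.verts) (hxy : x ≠ y)
    {n : ℕ} (hn : D.graph.dist x y = n)
    (p0 p1 : D.graph.Walk x y) (h0 : p0.length = n) (h1 : p1.length = n)
    (hb0 : ∀ i < p0.length, D.BoundaryEdge {p0.getVert i, p0.getVert (i + 1)})
    (hb1 : ∀ i < p1.length, D.BoundaryEdge {p1.getVert i, p1.getVert (i + 1)})
    (hmeet : ∀ v : ℕ, v ∈ p0.support → v ∈ p1.support → v = x ∨ v = y)
    (hcover : ∀ v ∈ D.verts, D.IsBoundary v → v ∈ p0.support ∨ v ∈ p1.support)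
    (φ : ℕ → V) (hmap : K.IsSurfaceMap D φ)
    (hgX : K.graph.dist (φ x) (φ y) = n) :
    ∀ w ∈ D.verts, ¬D.IsBoundary w →
      D.graph.dist w x ≤ n - 2 ∧ D.graph.dist w y ≤ n - 2 ∧
      K.graph.dist (φ w) (φ x) ≤ n - 2 ∧ K.graph.dist (φ w) (φ y) ≤ n - 2 :=
  stmt14_digon_interior_distance_general K D ι hiso hinj x y hx hy hxy hn p0 p1 h0 h1 hb0 hb1 hmeet
    hcover φ hmap
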